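/- Let P and Q be finite nonempty posets, and assume P is connected, P is not a chain, and P is co-rooted. Then the duality condition L(P,Q)^∨ = L(Q,P)^τ holds if and only if Q is co-rooted. -/

import Mathlib

/-!
A finite, connected, co-rooted poset `P` has a top element, so for isotone `φ : P → Q` and
`ψ : Q → P` the map `ψ ∘ φ` has a fixed point `p`, and `q = φ p` satisfies `φ (ψ q) = q`: every
generator of `L(Q,P)^τ` lies in `L(P,Q)^∨`.

Both ideals are monomial ideals, so their equality says: a set `S ⊆ P × Q` meets the graph of
every isotone `φ : P → Q` iff it contains the transposed graph of some isotone `ψ : Q → P`.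
If `Q` is co-rooted, `ψ` is built from the top of `Q` downwards along upper covers, choosing
`ψ q` among the elements `admissible` at `q`. These sets are nonempty: if the one at `r` were
empty, an isotone `φ` whose graph avoids `S` could be built from the top of `P` downwards, each
value found by descending in `Q` (first from `r`, then from the value at the upper cover).
Conversely, if `q₁, q₂` are incomparable with a common strict lower bound `q₀`, and `a, b ∈ P`
are incomparable, then `S = {(p, q) | q ≠ q₁, q₂} ∪ {(a, q₁), (b, q₂)}` meets every isotone
graph (by connectedness an isotone map with values in `{q₁, q₂}` is constant), while an
isotone `ψ` with transposed graph in `S` would put `ψ q₀` strictly below both `a` and `b`.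
-/

open MvPolynomial

/-- The ideal `L(P,Q)` generated by the monomials `u_φ = ∏_{p∈P} x_{p,φ(p)}`
over all isotone maps `φ : P → Q`. -/
noncomputable def isoL (P Q K : Type*) [PartialOrder P] [PartialOrder Q] [Fintype P]
    [Field K] : Ideal (MvPolynomial (P × Q) K) :=
  Ideal.span { u | ∃ φ : P →o Q, u = ∏ p : P, X (p, φ p) }

/-- The Alexander dual `L(P,Q)^∨ = ⋂_{φ} (x_{p,φ(p)} : p ∈ P)`. -/
noncomputable def isoDual (P Q K : Type*) [PartialOrder P] [PartialOrder Q]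
    [Field K] : Ideal (MvPolynomial (P × Q) K) :=
  ⨅ φ : P →o Q, Ideal.span { u | ∃ p : P, u = X (p, φ p) }

/-- The ideal `L(Q,P)^τ ⊆ K[x_{pq}]` generated by `∏_{q∈Q} x_{ψ(q),q}` for `ψ ∈ Hom(Q,P)`. -/
noncomputable def isoTau (P Q K : Type*) [PartialOrder P] [PartialOrder Q] [Fintype Q]
    [Field K] : Ideal (MvPolynomial (P × Q) K) :=
  Ideal.span { u | ∃ ψ : Q →o P, u = ∏ q : Q, X (ψ q, q) }

/-- The prime ideal `𝔭_ψ = (x_{ψ(q),q} : q ∈ Q)`. -/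
noncomputable def pPsi (P Q K : Type*) [PartialOrder P] [PartialOrder Q]
    [Field K] (ψ : Q →o P) : Ideal (MvPolynomial (P × Q) K) :=
  Ideal.span { u | ∃ q : Q, u = X (ψ q, q) }

/-- The height of an ideal: the infimum of the heights (in the prime spectrum)
of the prime ideals containing it. -/
noncomputable def idealHeight {R : Type*} [CommRing R] (I : Ideal R) : ℕ∞ :=
  ⨅ J : {J : PrimeSpectrum R // I ≤ J.asIdeal}, Order.height J.1

/-- `P` is connected: any two elements are linked by a chain of comparabilities. -/
def PosetConnected (P : Type*) [PartialOrder P] : Prop :=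
  ∀ a b : P, Relation.ReflTransGen (fun x y : P => x ≤ y ∨ y ≤ x) a b

/-- `P` is rooted: two incomparable elements have no common strict upper bound. -/
def Rooted (P : Type*) [PartialOrder P] : Prop :=
  ∀ p₁ p₂ p : P, ¬ p₁ ≤ p₂ → ¬ p₂ ≤ p₁ → ¬ (p₁ < p ∧ p₂ < p)

/-- `P` is co-rooted: two incomparable elements have no common strict lower bound. -/
def CoRooted (P : Type*) [PartialOrder P] : Prop :=
  ∀ p₁ p₂ p : P, ¬ p₁ ≤ p₂ → ¬ p₂ ≤ p₁ → ¬ (p < p₁ ∧ p < p₂)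

/-- `P` is a chain, i.e. totally ordered. -/
def IsChainPoset (P : Type*) [PartialOrder P] : Prop :=
  ∀ a b : P, a ≤ b ∨ b ≤ a

theorem PosetConnected.forall_of_invariant {P : Type*} [PartialOrder P] (hP : PosetConnected P)
    {s : P → Prop} (hs : ∀ x y, (x ≤ y ∨ y ≤ x) → s x → s y) {a : P} (ha : s a) (b : P) :
    s b := by
  induction hP a b with
  | refl => exact ha
  | tail _ hxy ih => exact hs _ _ hxy ih

namespace CoRooted

variable {α : Type*} [PartialOrder α]

theorem le_total_of_le (hα : CoRooted α) {p a b : α} (ha : p ≤ a) (hb : p ≤ b) :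
    a ≤ b ∨ b ≤ a := by
  by_contra! h
  exact hα a b p h.1 h.2 ⟨ha.lt_of_ne (by rintro rfl; exact h.1 hb),
    hb.lt_of_ne (by rintro rfl; exact h.2 ha)⟩

theorem isTop_of_isMax (hα : CoRooted α) (hconn : PosetConnected α) {m : α} (hm : IsMax m) :
    IsTop m := by
  refine hconn.forall_of_invariant (s := (· ≤ m)) ?_ le_rfl
  rintro x y (hxy | hyx) hx
  · exact (hα.le_total_of_le hxy hx).elim id fun h => hm h
  · exact hyx.trans hx

theorem exists_isTop [Finite α] [Nonempty α] (hα : CoRooted α) (hconn : PosetConnected α) :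
    ∃ t : α, IsTop t := by
  obtain ⟨m, hm⟩ := Set.finite_univ.exists_maximal (Set.univ_nonempty (α := α))
  exact ⟨m, hα.isTop_of_isMax hconn fun y h => hm.2 trivial h⟩

end CoRooted

theorem OrderHom.exists_apply_eq_self_of_isTop {α : Type*} [PartialOrder α] [WellFoundedLT α]
    (f : α →o α) {t : α} (ht : IsTop t) : ∃ p, f p = p := by
  obtain ⟨p, hp, hmin⟩ := wellFounded_lt.has_min {p | f p ≤ p} ⟨t, ht _⟩
  exact ⟨p, hp.eq_of_not_lt (hmin (f p) (f.monotone hp))⟩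

theorem CoRooted.exists_apply_apply_eq_self {P Q : Type*} [PartialOrder P] [PartialOrder Q]
    [Finite P] [Nonempty P] (hP : CoRooted P) (hconn : PosetConnected P)
    (φ : P →o Q) (ψ : Q →o P) : ∃ q, φ (ψ q) = q := by
  obtain ⟨t, ht⟩ := hP.exists_isTop hconn
  obtain ⟨p, hp⟩ := (ψ.comp φ).exists_apply_eq_self_of_isTop ht
  exact ⟨φ p, congrArg φ hp⟩

section UpperCover

variable {α : Type*} [PartialOrder α] [WellFoundedLT α]

open Classical in
noncomputable def upperCover (a : α) : α :=
  if h : IsMax a then a else (exists_covBy_le_of_lt (not_isMax_iff.1 h).choose_spec).choose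

theorem covBy_upperCover {a : α} (h : ¬IsMax a) : a ⋖ upperCover a := by
  rw [upperCover, dif_neg h]
  exact (exists_covBy_le_of_lt (not_isMax_iff.1 h).choose_spec).choose_spec.1

theorem CoRooted.upperCover_le (hα : CoRooted α) {a b : α} (h : a < b) : upperCover a ≤ b := by
  have hc := covBy_upperCover (not_isMax_of_lt h)
  rcases hα.le_total_of_le hc.le h.le with hle | hle
  · exact hle
  · rcases hle.eq_or_lt with rfl | hlt
    · exact le_rfl
    · exact (hc.2 h hlt).elim

end UpperCover

section DescendingSelection

variable {α β : Type*} [PartialOrder α] [WellFoundedLT α] [WellFoundedGT α] [Preorder β]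
  {I : α → Set β}

open Classical in
noncomputable def descendingSelection (hne : ∀ a, (I a).Nonempty)
    (hstep : ∀ a a', a < a' → ∀ b' ∈ I a', ∃ b ∈ I a, b ≤ b') : (a : α) → I a :=
  WellFoundedGT.fix fun a sel =>
    if h : IsMax a then ⟨(hne a).some, (hne a).some_mem⟩
    else
      have hb := hstep a _ (covBy_upperCover h).lt _ (sel _ (covBy_upperCover h).lt).2
      ⟨hb.choose, hb.choose_spec.1⟩

theorem descendingSelection_le_upperCover (hne : ∀ a, (I a).Nonempty)
    (hstep : ∀ a a', a < a' → ∀ b' ∈ I a', ∃ b ∈ I a, b ≤ b') {a : α} (h : ¬IsMax a) :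
    (descendingSelection hne hstep a : β) ≤ descendingSelection hne hstep (upperCover a) := by
  rw [descendingSelection, WellFoundedGT.fix_eq, dif_neg h]
  exact (hstep a _ (covBy_upperCover h).lt _ (descendingSelection hne hstep _).2).choose_spec.2

theorem CoRooted.exists_monotone_forall_mem (hα : CoRooted α) (hne : ∀ a, (I a).Nonempty)
    (hstep : ∀ a a', a < a' → ∀ b' ∈ I a', ∃ b ∈ I a, b ≤ b') :
    ∃ f : α →o β, ∀ a, f a ∈ I a := by
  refine ⟨⟨fun a => descendingSelection hne hstep a, fun a b hab => ?_⟩,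
    fun a => (descendingSelection hne hstep a).2⟩
  induction a using WellFoundedGT.induction generalizing b with
  | _ a ih =>
    rcases hab.eq_or_lt with rfl | hlt
    · exact le_rfl
    · have h := not_isMax_of_lt hlt
      exact (descendingSelection_le_upperCover hne hstep h).trans
        (ih _ (covBy_upperCover h).lt b (hα.upperCover_le hlt))

end DescendingSelection

section Admissible

variable {P Q : Type*} [PartialOrder P] [PartialOrder Q] [WellFoundedLT Q] {S : Set (P × Q)}

def admissible (S : Set (P × Q)) : Q → Set P :=
  WellFoundedLT.fix fun q adm => {p | (p, q) ∈ S ∧ ∀ c (hc : c < q), ∃ a ∈ adm c hc, a ≤ p}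

theorem mem_admissible {p : P} {q : Q} :
    p ∈ admissible S q ↔ (p, q) ∈ S ∧ ∀ c < q, ∃ a ∈ admissible S c, a ≤ p := by
  rw [admissible, WellFoundedLT.fix_eq]
  rfl

theorem exists_le_forall_not_le_and_notMem (p : P) {q : Q}
    (hq : ∀ a ∈ admissible S q, ¬a ≤ p) :
    ∃ q' ≤ q, (∀ a ∈ admissible S q', ¬a ≤ p) ∧ (p, q') ∉ S := by
  induction q using WellFoundedLT.induction with
  | _ q ih =>
    by_cases hS : (p, q) ∈ S
    · have hp : p ∉ admissible S q := fun hp => hq p hp le_rfl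
      rw [mem_admissible] at hp
      simp only [not_and, not_forall, not_exists] at hp
      obtain ⟨c, hc, hcp⟩ := hp hS
      obtain ⟨q', hq', hq'p⟩ := ih c hc hcp
      exact ⟨q', hq'.trans hc.le, hq'p⟩
    · exact ⟨q, le_rfl, hq, hS⟩

theorem admissible_nonempty [WellFoundedLT P] [WellFoundedGT P] (hP : CoRooted P)
    (hS : ∀ φ : P →o Q, ∃ p, (p, φ p) ∈ S) (r : Q) : (admissible S r).Nonempty := by
  by_contra hr
  obtain ⟨φ, hφ⟩ := hP.exists_monotone_forall_mem
    (I := fun p => {q | (∀ a ∈ admissible S q, ¬a ≤ p) ∧ (p, q) ∉ S})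
    (fun p => by
      obtain ⟨q, -, hq⟩ := exists_le_forall_not_le_and_notMem p (q := r)
        fun a ha => (hr ⟨a, ha⟩).elim
      exact ⟨q, hq⟩)
    (fun p p' hpp' q' hq' => by
      obtain ⟨q, hqq', hq⟩ := exists_le_forall_not_le_and_notMem p
        fun a ha hap => hq'.1 a ha (hap.trans hpp'.le)
      exact ⟨q, hq, hqq'⟩)
  obtain ⟨p, hp⟩ := hS φ
  exact (hφ p).2 hp

theorem exists_orderHom_forall_mem_of_forall_exists_mem [WellFoundedGT Q] [WellFoundedLT P]
    [WellFoundedGT P] (hP : CoRooted P) (hQ : CoRooted Q)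
    (hS : ∀ φ : P →o Q, ∃ p, (p, φ p) ∈ S) : ∃ ψ : Q →o P, ∀ q, (ψ q, q) ∈ S := by
  obtain ⟨ψ, hψ⟩ := hQ.exists_monotone_forall_mem (admissible_nonempty hP hS)
    fun q q' hqq' p' hp' => (mem_admissible.1 hp').2 q hqq'
  exact ⟨ψ, fun q => (mem_admissible.1 (hψ q)).1⟩

end Admissible

theorem PosetConnected.orderHom_apply_eq_of_incomparable {P Q : Type*} [PartialOrder P]
    [PartialOrder Q] (hconn : PosetConnected P) {q₁ q₂ : Q} (h12 : ¬q₁ ≤ q₂) (h21 : ¬q₂ ≤ q₁)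
    (φ : P →o Q) (hφ : ∀ p, φ p = q₁ ∨ φ p = q₂) (x y : P) : φ x = φ y := by
  refine (hconn.forall_of_invariant (s := (φ · = φ x)) (fun a b hab ha => ?_) rfl y).symm
  have hcmp : φ a ≤ φ b ∨ φ b ≤ φ a := hab.imp (fun h => φ.monotone h) fun h => φ.monotone h
  rw [← ha]
  rcases hφ a with ha | ha <;> rcases hφ b with hb | hb <;> rw [ha, hb] at hcmp ⊢
  · exact (hcmp.elim h12 h21).elim
  · exact (hcmp.elim h21 h12).elim

theorem coRooted_of_forall_exists_orderHom {P Q : Type*} [PartialOrder P] [PartialOrder Q]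
    (hconn : PosetConnected P) (hchain : ¬IsChainPoset P) (hP : CoRooted P)
    (h : ∀ S : Set (P × Q),
      (∀ φ : P →o Q, ∃ p, (p, φ p) ∈ S) → ∃ ψ : Q →o P, ∀ q, (ψ q, q) ∈ S) :
    CoRooted Q := by
  intro q₁ q₂ q₀ h12 h21 ⟨h01, h02⟩
  simp only [IsChainPoset, not_forall, not_or] at hchain
  obtain ⟨a, b, hab, hba⟩ := hchain
  have hq : q₁ ≠ q₂ := by rintro rfl; exact h12 le_rfl
  obtain ⟨ψ, hψ⟩ := h {x | x.2 ≠ q₁ ∧ x.2 ≠ q₂ ∨ x = (a, q₁) ∨ x = (b, q₂)} fun φ => by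
    by_cases hφ : ∃ p, φ p ≠ q₁ ∧ φ p ≠ q₂
    · obtain ⟨p, hp⟩ := hφ
      exact ⟨p, Or.inl hp⟩
    push Not at hφ
    rcases eq_or_ne (φ a) q₁ with ha | ha
    · exact ⟨a, by simp [ha]⟩
    · have hb : φ b = q₂ := by
        rw [hconn.orderHom_apply_eq_of_incomparable h12 h21 φ
          (fun p => (eq_or_ne _ _).imp_right (hφ p)) b a, hφ a ha]
      exact ⟨b, by simp [hb]⟩
  have hψ₁ : ψ q₁ = a := by simpa [hq] using hψ q₁
  have hψ₂ : ψ q₂ = b := by simpa [hq.symm] using hψ q₂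
  have ha : ψ q₀ ≤ a := hψ₁ ▸ ψ.monotone h01.le
  have hb : ψ q₀ ≤ b := hψ₂ ▸ ψ.monotone h02.le
  exact hP a b (ψ q₀) hab hba
    ⟨ha.lt_of_ne fun h => hab (h ▸ hb), hb.lt_of_ne fun h => hba (h ▸ ha)⟩

theorem CoRooted.forall_exists_mem_of_exists_orderHom {P Q : Type*} [PartialOrder P]
    [PartialOrder Q] [Finite P] [Nonempty P] (hP : CoRooted P) (hconn : PosetConnected P)
    {S : Set (P × Q)} (hS : ∃ ψ : Q →o P, ∀ q, (ψ q, q) ∈ S) :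
    ∀ φ : P →o Q, ∃ p, (p, φ p) ∈ S := by
  obtain ⟨ψ, hψ⟩ := hS
  intro φ
  obtain ⟨q, hq⟩ := hP.exists_apply_apply_eq_self hconn φ ψ
  exact ⟨ψ q, by rw [hq]; exact hψ q⟩

theorem sum_single_graph_apply {P Q : Type*} [Fintype Q] [DecidableEq P] [DecidableEq Q]
    (ψ : Q → P) (x : P × Q) :
    (∑ q, Finsupp.single (ψ q, q) 1 : P × Q →₀ ℕ) x = if ψ x.2 = x.1 then 1 else 0 := by
  rw [Finsupp.finsetSum_apply, Finset.sum_eq_single x.2]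
  · simp only [Finsupp.single_apply, Prod.ext_iff, and_true]
  · intro q _ hq
    simp [Prod.ext_iff, hq]
  · simp

theorem sum_single_graph_le_iff {P Q : Type*} [Fintype Q] (ψ : Q → P) (m : P × Q →₀ ℕ) :
    ∑ q, Finsupp.single (ψ q, q) 1 ≤ m ↔ ∀ q, m (ψ q, q) ≠ 0 := by
  classical
  simp only [Finsupp.le_def, Prod.forall, sum_single_graph_apply]
  refine ⟨fun h q => ?_, fun h p q => ?_⟩
  · simpa [Nat.one_le_iff_ne_zero] using h (ψ q) q
  · split_ifs with hpq
    · exact Nat.one_le_iff_ne_zero.2 (hpq ▸ h q)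
    · exact Nat.zero_le _

section Ideals

variable {P Q K : Type*} [PartialOrder P] [PartialOrder Q] [Field K]

theorem mem_isoDual_iff {f : MvPolynomial (P × Q) K} :
    f ∈ isoDual P Q K ↔ ∀ m ∈ f.support, ∀ φ : P →o Q, ∃ p, m (p, φ p) ≠ 0 := by
  have hgen (φ : P →o Q) : {u : MvPolynomial (P × Q) K | ∃ p, u = X (p, φ p)} =
      X '' Set.range fun p => (p, φ p) := by
    ext u
    simp [eq_comm]
  simp only [isoDual, Ideal.mem_iInf, hgen, mem_ideal_span_X_image, Set.exists_range_iff]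
  exact ⟨fun h m hm φ => h φ m hm, fun h φ m hm => h m hm φ⟩

theorem mem_isoTau_iff [Fintype Q] {f : MvPolynomial (P × Q) K} :
    f ∈ isoTau P Q K ↔ ∀ m ∈ f.support, ∃ ψ : Q →o P, ∀ q, m (ψ q, q) ≠ 0 := by
  have hgen : {u | ∃ ψ : Q →o P, u = ∏ q, X (ψ q, q)} = (fun s => monomial s (1 : K)) ''
      Set.range fun ψ : Q →o P => ∑ q, Finsupp.single (ψ q, q) 1 := by
    ext u
    simp [monomial_sum_one, X, eq_comm]
  simp only [isoTau, hgen, mem_ideal_span_monomial_image, Set.exists_range_iff,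
    sum_single_graph_le_iff]

theorem isoDual_eq_isoTau_iff [Fintype P] [Fintype Q] :
    isoDual P Q K = isoTau P Q K ↔ ∀ S : Set (P × Q),
      (∀ φ : P →o Q, ∃ p, (p, φ p) ∈ S) ↔ ∃ ψ : Q →o P, ∀ q, (ψ q, q) ∈ S := by
  classical
  constructor
  · intro h S
    let m : P × Q →₀ ℕ := Finsupp.equivFunOnFinite.symm fun x => if x ∈ S then 1 else 0
    have hm (x : P × Q) : m x ≠ 0 ↔ x ∈ S := by simp [m]
    simpa [mem_isoDual_iff, mem_isoTau_iff, support_monomial, hm] using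
      SetLike.ext_iff.1 h (monomial m 1)
  · intro h
    ext f
    rw [mem_isoDual_iff, mem_isoTau_iff]
    exact forall₂_congr fun m _ => h {x | m x ≠ 0}

end Ideals

theorem stmt_6_general (P Q K : Type*) [PartialOrder P] [PartialOrder Q]
    [Fintype P] [Fintype Q] [Nonempty P] [Field K]
    (hconn : PosetConnected P) (hchain : ¬ IsChainPoset P) (hcoroot : CoRooted P) :
    isoDual P Q K = isoTau P Q K ↔ CoRooted Q := by
  rw [isoDual_eq_isoTau_iff]
  refine ⟨fun h => coRooted_of_forall_exists_orderHom hconn hchain hcoroot fun S => (h S).1,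
    fun hQ S => ⟨exists_orderHom_forall_mem_of_forall_exists_mem hcoroot hQ,
      hcoroot.forall_exists_mem_of_exists_orderHom hconn⟩⟩

/-- If `P` is connected, not a chain, and co-rooted, then
`L(P,Q)^∨ = L(Q,P)^τ` iff `Q` is co-rooted. -/
theorem stmt_6 (P Q K : Type*) [PartialOrder P] [PartialOrder Q]
    [Fintype P] [Fintype Q] [Nonempty P] [Nonempty Q] [Field K]
    (hconn : PosetConnected P) (hchain : ¬ IsChainPoset P) (hcoroot : CoRooted P) :
    isoDual P Q K = isoTau P Q K ↔ CoRooted Q :=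
  stmt_6_general P Q K hconn hchain hcoroot
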